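/- Let R be an RC-closed collection of strings over the DNA alphabet, each terminated by the sentinel $, let X be a nonempty string over the DNA alphabet occurring in R, and let c be a DNA symbol. In the lexicographically sorted list of all suffixes of the sentinel-terminated strings, let [s_X, e_X] and [s_X̂, e_X̂] be the intervals of suffixes prefixed by X and by X̂, respectively. Then the interval of suffixes prefixed by X̂·π(c) is [s_X̂ + y, s_X̂ + y + z - 1], where y is the number of occurrences of X in strings of R whose left-context symbol a satisfies π(a) < π(c), and z = occ_R(c·X) is the number of occurrences of c·X in strings of R. Equivalently, y equals the number of ranks k in [s_X, e_X] with π(BWT[k]) < π(c), where BWT[k] is the symbol preceding the k-th sorted suffix within its string (the symbol preceding a full string T$ being $). -/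

import Mathlib

/-- The DNA alphabet Σ = {A, C, G, T}. -/
inductive Base : Type
  | A | C | G | T
  deriving DecidableEq, Repr

instance : Fintype Base := ⟨{.A, .C, .G, .T}, fun x => by cases x <;> decide⟩

/-- The DNA complement permutation π: A ↔ T, C ↔ G. -/
def comp : Base → Base
  | .A => .T
  | .T => .A
  | .C => .G
  | .G => .C

/-- The reverse complement Ŵ of a DNA string W. -/
def revComp (W : List Base) : List Base := W.reverse.map comp

/-- `W` occurs in `T` at (0-indexed) position `i`, i.e. `T[i..i+|W|-1] = W`. -/
def occursAt (W T : List Base) (i : ℕ) : Prop :=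
  i + W.length ≤ T.length ∧ (T.drop i).take W.length = W

instance (W T : List Base) : DecidablePred (occursAt W T) := fun i =>
  inferInstanceAs (Decidable (_ ∧ _))

/-- The number of occurrences of `W` in `T`. -/
noncomputable def occCount (W T : List Base) : ℕ := {i | occursAt W T i}.ncard

/-- The alphabet with the sentinel `$`: the sentinel is `⊥`, the DNA symbols are
coerced. The complement permutation is extended by `π($) = $`
(i.e. `WithBot.map comp ⊥ = ⊥`). -/
abbrev SymB := WithBot Base

/-- Left-context symbol of an occurrence of a string at (0-indexed) position `i`
in `T`: the symbol `T[i-1]` if `i > 0`, and the sentinel `$` otherwise. -/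
def leftCtx (T : List Base) (i : ℕ) : SymB :=
  if i = 0 then ⊥ else (T[i-1]?).elim ⊥ (fun a => (a : SymB))

/-- Right-context symbol of an occurrence of a string of length `m` at
(0-indexed) position `i` in `T`: the symbol `T[i+m]` if the occurrence does not
end at the last position of `T`, and the sentinel `$` otherwise. -/
def rightCtx (T : List Base) (m i : ℕ) : SymB :=
  (T[i+m]?).elim ⊥ (fun a => (a : SymB))

def Base.toNat : Base → ℕ
  | .A => 0 | .C => 1 | .G => 2 | .T => 3

/-- The lexicographic order A < C < G < T on the DNA alphabet; the sentinel
`⊥ = $` of `WithBot Base` is then smaller than every DNA symbol. -/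
instance : LinearOrder Base := LinearOrder.lift' Base.toNat (by decide)

/-- A DNA string viewed over the alphabet `WithBot Base` (DNA symbols + `$`). -/
def toW (X : List Base) : List (WithBot Base) := X.map (fun a => (a : WithBot Base))

/-- The sentinel-terminated string `T$`. -/
def sentinelTerm (T : List Base) : List (WithBot Base) := toW T ++ [⊥]

/-- The multiset of all (nonempty) suffixes of the sentinel-terminated strings
`T$` for `T` in `R`, with multiplicity. -/
def allSuffixes (R : Multiset (List Base)) : Multiset (List (WithBot Base)) :=
  R.bind (fun T => ((sentinelTerm T).tails.dropLast : List (List (WithBot Base))))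

/-- The list of all suffixes of the collection, sorted in nondecreasing
lexicographic order. -/
def sortedSuffixes (R : Multiset (List Base)) : List (List (WithBot Base)) :=
  (allSuffixes R).sort (· ≤ ·)

/-- The set of ranks (positions in the sorted suffix list) of the suffixes that
have `Y` as a prefix. -/
def rankSet (R : Multiset (List Base)) (Y : List (WithBot Base)) : Set ℕ :=
  {k | k < (sortedSuffixes R).length ∧ Y <+: (sortedSuffixes R).getD k []}

/-- A collection (multiset) of strings is RC-closed if every string has the same
multiplicity as its reverse complement. -/
def RCClosed (R : Multiset (List Base)) : Prop :=
  ∀ T : List Base, R.count T = R.count (revComp T)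

/-- Total number of occurrences of `W` among the strings of the collection `R`
(with multiplicity). -/
noncomputable def occR (R : Multiset (List Base)) (W : List Base) : ℕ :=
  (R.map (fun T => occCount W T)).sum

/-- The multiset of pairs (suffix of `T$`, symbol preceding that suffix within
`T$`), over all strings `T` of `R`; the symbol preceding the full string `T$`
is the sentinel `$ = ⊥`. The second component is the BWT symbol associated with
the suffix. -/
def taggedSuffixes (R : Multiset (List Base)) :
    Multiset (List (WithBot Base) × WithBot Base) :=
  R.bind (fun T =>
    ((List.range (T.length + 1)).map (fun i =>
      ((sentinelTerm T).drop i,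
        if i = 0 then (⊥ : WithBot Base) else (sentinelTerm T).getD (i-1) ⊥)) :
      List (List (WithBot Base) × WithBot Base)))

/-- `#{k ∈ [s_X, e_X] : π(BWT[k]) < π(c)}`: the number of suffixes of the
collection prefixed by `X` (equivalently, of ranks `k` in the interval
`[s_X, e_X]` of `X`) whose BWT symbol `BWT[k]` satisfies `π(BWT[k]) < π(c)`. -/
def bwtCount (R : Multiset (List Base)) (X : List Base) (c : Base) : ℕ :=
  Multiset.card ((taggedSuffixes R).filter (fun p =>
    toW X <+: p.1 ∧ WithBot.map comp p.2 < ((comp c : Base) : WithBot Base)))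

/-!
Among the suffixes prefixed by `X̂`, lexicographic order sorts by the symbol that follows `X̂`,
so inside the interval of `X̂` those continued by `π(c)` form a block, preceded exactly by those
continued by a symbol `b < π(c)`. Reverse complementation turns an occurrence of `X̂` followed by
`b` in `T` into an occurrence of `X` preceded by `π(b)` in `T̂` (with `π($) = $`), and
RC-closedness lets us sum over `T̂ ∈ R` instead of `T ∈ R`. Hence the block starts `y` places
into the interval of `X̂` and has `occ_R(c·X) = z` elements. The same count `y`, read off the
suffixes prefixed by `X` and their preceding symbols, is the BWT count.
-/

namespace List

variable {α : Type*} [LinearOrder α]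

theorem le_of_append_le_append_left {l l₁ l₂ : List α} (h : l ++ l₁ ≤ l ++ l₂) :
    l₁ ≤ l₂ :=
  not_lt.1 fun hlt => not_lt.2 h (append_left_lt hlt)

theorem getD_length_le_getD_of_prefix [OrderBot α] {W S₁ S₂ : List α}
    (h₁ : W <+: S₁) (h₂ : W <+: S₂) (h : S₁ ≤ S₂) :
    S₁.getD W.length ⊥ ≤ S₂.getD W.length ⊥ := by
  obtain ⟨t₁, rfl⟩ := h₁
  obtain ⟨t₂, rfl⟩ := h₂
  replace h := le_of_append_le_append_left h
  rw [getD_append_right _ _ _ _ le_rfl, getD_append_right _ _ _ _ le_rfl, Nat.sub_self]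
  cases t₁ with
  | nil => exact bot_le
  | cons a r₁ =>
    cases t₂ with
    | nil => exact absurd (nil_lt_cons a r₁) (not_lt.2 h)
    | cons b r₂ => exact not_lt.1 fun hba => not_lt.2 h (cons_lt_cons_iff.2 (Or.inl hba))

end List

theorem List.append_singleton_prefix_iff {α : Type*} {W S : List α} {x d : α} (hx : x ≠ d) :
    W ++ [x] <+: S ↔ W <+: S ∧ S.getD W.length d = x := by
  constructor
  · rintro ⟨r, rfl⟩
    exact ⟨⟨x :: r, by simp⟩, by simp⟩
  · rintro ⟨⟨t, rfl⟩, hx'⟩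
    cases t with
    | nil => simp [hx.symm] at hx'
    | cons a r => simp_all

theorem List.tails_dropLast {α : Type*} (L : List α) :
    L.tails.dropLast = (List.range L.length).map (L.drop ·) := by
  induction L with
  | nil => simp
  | cons a t ih =>
    rw [List.tails_cons, List.dropLast_cons_of_ne_nil (by cases t <;> simp),
      List.length_cons, List.range_succ_eq_map, List.map_cons, ih, List.map_map]
    simp [Function.comp_def]

theorem List.card_filter_range_getD {α : Type*} (L : List α) (p : α → Prop) [DecidablePred p]
    (d : α) : ((Finset.range L.length).filter (fun k => p (L.getD k d))).card = L.countP p := by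
  induction L with
  | nil => simp
  | cons a t ih =>
    rw [Finset.card_filter] at ih ⊢
    rw [List.length_cons, Finset.sum_range_succ', List.countP_cons]
    simp only [List.getD_cons_succ, List.getD_cons_zero, ih, decide_eq_true_eq]

theorem List.Pairwise.getD_le_getD {α : Type*} [Preorder α] {L : List α}
    (hL : L.Pairwise (· ≤ ·)) (d : α) {k k' : ℕ} (hk : k ≤ k') (hk' : k' < L.length) :
    L.getD k d ≤ L.getD k' d := by
  rw [List.getD_eq_getElem _ _ (by omega), List.getD_eq_getElem _ _ hk']
  rcases hk.lt_or_eq with hlt | rfl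
  · exact List.pairwise_iff_getElem.1 hL _ _ _ _ hlt
  · exact le_rfl

theorem Multiset.countP_bind {β γ : Type*} (s : Multiset β) (f : β → Multiset γ)
    (p : γ → Prop) [DecidablePred p] :
    (s.bind f).countP p = (s.map fun b => (f b).countP p).sum := by
  simp [Multiset.countP_eq_card_filter, Multiset.filter_bind, Multiset.card_bind]

theorem Set.ncard_setOf_eq_countP_range {p : ℕ → Prop} [DecidablePred p] {n : ℕ}
    (h : ∀ i, p i → i < n) : {i | p i}.ncard = (List.range n).countP p := by
  have hset : {i | p i} = ↑((Finset.range n).filter p) := by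
    ext i; simpa using fun hi => h i hi
  rw [hset, Set.ncard_coe_finset]
  simp [Finset.card, Finset.filter_val, Multiset.range, List.countP_eq_length_filter]

theorem Finset.eq_Ico_card_of_lowerClosed {s e : ℕ} {A : Finset ℕ} (hA : A ⊆ Finset.Ico s e)
    (hlow : ∀ a ∈ A, ∀ k ∈ Finset.Ico s e, k ≤ a → k ∈ A) :
    A = Finset.Ico s (s + A.card) := by
  refine Finset.eq_of_subset_of_card_le (fun a ha => ?_) (by simp)
  have ha' := Finset.mem_Ico.1 (hA ha)
  refine Finset.mem_Ico.2 ⟨ha'.1, ?_⟩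
  by_contra! h
  have hsub : Finset.Ico s (a + 1) ⊆ A := fun k hk => by
    rw [Finset.mem_Ico] at hk
    exact hlow a ha k (Finset.mem_Ico.2 ⟨hk.1, by omega⟩) (by omega)
  have := Finset.card_le_card hsub
  simp only [Nat.card_Ico] at this
  omega

section MonotoneOnIco

variable {β : Type*} [LinearOrder β] {s e : ℕ} {f : ℕ → β}

theorem Finset.Ico_filter_mem_lowerSet_of_monotoneOn (hf : MonotoneOn f (Set.Ico s e)) {t : Set β}
    (ht : IsLowerSet t) [DecidablePred (· ∈ t)] :
    (Finset.Ico s e).filter (f · ∈ t) =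
      Finset.Ico s (s + ((Finset.Ico s e).filter (f · ∈ t)).card) := by
  refine Finset.eq_Ico_card_of_lowerClosed (Finset.filter_subset _ _) fun a ha k hk hka => ?_
  rw [Finset.mem_filter] at ha ⊢
  exact ⟨hk, ht (hf (by simpa using hk) (by simpa using ha.1) hka) ha.2⟩

theorem Finset.Ico_filter_eq_of_monotoneOn (hf : MonotoneOn f (Set.Ico s e)) (v : β) :
    (Finset.Ico s e).filter (f · = v) =
      Finset.Ico (s + ((Finset.Ico s e).filter (f · < v)).card)
        (s + ((Finset.Ico s e).filter (f · < v)).card +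
          ((Finset.Ico s e).filter (f · = v)).card) := by
  have hlt := Finset.Ico_filter_mem_lowerSet_of_monotoneOn hf (isLowerSet_Iio v)
  have hle := Finset.Ico_filter_mem_lowerSet_of_monotoneOn hf (isLowerSet_Iic v)
  simp only [Set.mem_Iio, Set.mem_Iic] at hlt hle
  have hsplit : (Finset.Ico s e).filter (f · = v) =
      (Finset.Ico s e).filter (f · ≤ v) \ (Finset.Ico s e).filter (f · < v) := by
    ext k
    simp only [Finset.mem_filter, Finset.mem_sdiff, le_iff_lt_or_eq]
    grind
  have hsub : (Finset.Ico s e).filter (f · < v) ⊆ (Finset.Ico s e).filter (f · ≤ v) :=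
    Finset.monotone_filter_right _ fun _ _ => le_of_lt
  have hcard := Finset.card_sdiff_of_subset hsub
  have hmono := Finset.card_le_card hsub
  rw [← hsplit] at hcard
  conv_lhs => rw [hsplit, hle, hlt, Finset.Ico_sdiff_Ico_left, max_eq_right (by omega)]
  rw [hcard]
  congr 1
  omega

end MonotoneOnIco

theorem toW_eq_map (X : List Base) : toW X = X.map WithBot.some := by
  simp [toW, List.map_eq_flatMap]

@[simp]
theorem length_toW (X : List Base) : (toW X).length = X.length := by
  simp [toW_eq_map]

@[simp]
theorem length_sentinelTerm (T : List Base) : (sentinelTerm T).length = T.length + 1 := by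
  simp [sentinelTerm]

theorem comp_involutive : Function.Involutive comp := by
  intro b; cases b <;> rfl

theorem map_comp_involutive : Function.Involutive (WithBot.map comp) := by
  intro x; cases x <;> simp [comp_involutive _]

theorem revComp_involutive : Function.Involutive revComp := by
  intro W; simp [revComp, List.map_reverse, Function.comp_def, comp_involutive _]

@[simp]
theorem length_revComp (W : List Base) : (revComp W).length = W.length := by
  simp [revComp]

theorem revComp_append (u v : List Base) : revComp (u ++ v) = revComp v ++ revComp u := by
  simp [revComp]

theorem occursAt_iff_prefix_drop {Y T : List Base} {i : ℕ} (hi : i ≤ T.length) :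
    occursAt Y T i ↔ Y <+: T.drop i := by
  rw [occursAt, List.prefix_iff_eq_take]
  constructor
  · exact fun h => h.2.symm
  · intro h
    refine ⟨?_, h.symm⟩
    have := congrArg List.length h
    simp only [List.length_take, List.length_drop] at this
    omega

theorem occursAt_iff_eq_append {Y T : List Base} {i : ℕ} :
    occursAt Y T i ↔ ∃ u v, T = u ++ Y ++ v ∧ u.length = i := by
  constructor
  · intro h
    have hi : i ≤ T.length := by have := h.1; omega
    obtain ⟨v, hv⟩ := (occursAt_iff_prefix_drop hi).1 h
    exact ⟨T.take i, v, by rw [List.append_assoc, hv, List.take_append_drop], by simp [hi]⟩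
  · rintro ⟨u, v, rfl, rfl⟩
    rw [occursAt_iff_prefix_drop (by simp)]
    simp

theorem toW_prefix_toW_append_bot {Y Z : List Base} :
    toW Y <+: toW Z ++ [⊥] ↔ Y <+: Z := by
  rw [List.prefix_concat_iff, toW_eq_map, toW_eq_map]
  have hbot : Y.map WithBot.some ≠ Z.map WithBot.some ++ [⊥] := fun h => by
    simpa using congrArg (⊥ ∈ ·) h
  rw [List.prefix_map_iff_of_injective WithBot.coe_injective]
  simp [hbot]

theorem sentinelTerm_drop {T : List Base} {i : ℕ} (hi : i ≤ T.length) :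
    (sentinelTerm T).drop i = toW (T.drop i) ++ [⊥] := by
  rw [sentinelTerm, List.drop_append_of_le_length (by simpa [toW_eq_map] using hi),
    toW_eq_map, toW_eq_map, List.map_drop]

theorem toW_prefix_sentinelTerm_drop_iff {Y T : List Base} {i : ℕ} (hi : i ≤ T.length) :
    toW Y <+: (sentinelTerm T).drop i ↔ occursAt Y T i := by
  rw [sentinelTerm_drop hi, toW_prefix_toW_append_bot, occursAt_iff_prefix_drop hi]

theorem sentinelTerm_getD (T : List Base) (k : ℕ) :
    (sentinelTerm T).getD k ⊥ = T[k]?.elim ⊥ (↑) := by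
  rw [sentinelTerm, toW_eq_map, List.getD_eq_getElem?_getD, List.getElem?_append]
  by_cases hk : k < T.length
  · simp [hk]
  · rcases Nat.lt_or_ge k (T.length + 1) with hk' | hk' <;> simp [*]

theorem leftCtx_append (u w : List Base) :
    leftCtx (u ++ w) u.length = u.getLast?.elim ⊥ (↑) := by
  rw [leftCtx, List.getLast?_eq_getElem?]
  rcases eq_or_ne u [] with rfl | hu
  · simp
  · rw [if_neg (by simpa using hu), List.getElem?_append_left (by simp [List.length_pos_iff, hu])]

theorem rightCtx_append (u Y v : List Base) :
    rightCtx (u ++ Y ++ v) Y.length u.length = v.head?.elim ⊥ (↑) := by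
  simp [rightCtx, List.getElem?_append_right, List.head?_eq_getElem?]

theorem occursAt_cons_iff {c : Base} {X T : List Base} {j : ℕ} :
    occursAt (c :: X) T j ↔ occursAt X T (j + 1) ∧ leftCtx T (j + 1) = (c : SymB) := by
  constructor
  · rintro h
    obtain ⟨u, v, rfl, rfl⟩ := occursAt_iff_eq_append.1 h
    have hT : u ++ c :: X ++ v = (u ++ [c]) ++ X ++ v := by simp
    have hj : u.length + 1 = (u ++ [c]).length := by simp
    rw [hT, hj, List.append_assoc, leftCtx_append, ← List.append_assoc]
    exact ⟨occursAt_iff_eq_append.2 ⟨_, _, rfl, rfl⟩, by simp⟩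
  · rintro ⟨h, hc⟩
    obtain ⟨u, v, rfl, hu⟩ := occursAt_iff_eq_append.1 h
    have hne : u ≠ [] := List.ne_nil_of_length_eq_add_one hu
    rw [← hu, List.append_assoc, leftCtx_append, List.getLast?_eq_some_getLast hne] at hc
    have hlast : u.getLast hne = c := WithBot.coe_injective hc
    refine occursAt_iff_eq_append.2 ⟨u.dropLast, v, ?_, by simp; omega⟩
    conv_lhs => rw [← List.dropLast_append_getLast hne, hlast]
    simp

-- `T = u ++ Y ++ v` has reverse complement `v̂ ++ Ŷ ++ û`: the contexts trade sides and are
-- complemented.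
theorem occursAt_revComp {Y T : List Base} {i : ℕ} (h : occursAt Y T i) :
    occursAt (revComp Y) (revComp T) (T.length - Y.length - i) ∧
      rightCtx (revComp T) Y.length (T.length - Y.length - i) = WithBot.map comp (leftCtx T i) ∧
      leftCtx (revComp T) (T.length - Y.length - i) = WithBot.map comp (rightCtx T Y.length i) := by
  obtain ⟨u, v, rfl, rfl⟩ := occursAt_iff_eq_append.1 h
  have hT : revComp (u ++ Y ++ v) = revComp v ++ revComp Y ++ revComp u := by
    simp only [revComp_append, List.append_assoc]
  have hpos : (u ++ Y ++ v).length - Y.length - u.length = (revComp v).length := by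
    simp; omega
  rw [hT, hpos]
  refine ⟨occursAt_iff_eq_append.2 ⟨_, _, rfl, rfl⟩, ?_, ?_⟩
  · rw [← length_revComp Y, rightCtx_append, List.append_assoc, leftCtx_append]
    simp only [revComp, List.head?_map, List.head?_reverse]
    cases u.getLast? <;> rfl
  · rw [List.append_assoc, leftCtx_append, rightCtx_append]
    simp only [revComp, List.getLast?_map, List.getLast?_reverse]
    cases v.head? <;> rfl

theorem RCClosed.map_revComp {R : Multiset (List Base)} (hR : RCClosed R) :
    R.map revComp = R := by
  ext T
  conv_lhs => rw [← revComp_involutive T]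
  rw [Multiset.count_map_eq_count' _ _ revComp_involutive.injective, hR, revComp_involutive]

noncomputable def leftCtxCount (R : Multiset (List Base)) (X : List Base) (Q : SymB → Prop) :
    ℕ :=
  (R.map fun T => {i | occursAt X T i ∧ Q (leftCtx T i)}.ncard).sum

theorem ncard_occursAt_revComp (X T : List Base) (Q : SymB → Prop) :
    {i | occursAt (revComp X) T i ∧ Q (rightCtx T (revComp X).length i)}.ncard =
      {j | occursAt X (revComp T) j ∧ Q (WithBot.map comp (leftCtx (revComp T) j))}.ncard := by
  symm
  refine Set.ncard_congr (fun j _ => (revComp T).length - X.length - j) ?_ ?_ ?_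
  · rintro j ⟨hocc, hQ⟩
    obtain ⟨hocc', hctx, -⟩ := occursAt_revComp hocc
    rw [revComp_involutive] at hocc' hctx
    exact ⟨hocc', by rwa [length_revComp, hctx]⟩
  · rintro j₁ j₂ ⟨h₁, -⟩ ⟨h₂, -⟩ h
    have := h₁.1; have := h₂.1
    omega
  · rintro i ⟨hocc, hQ⟩
    obtain ⟨hocc', -, hctx⟩ := occursAt_revComp hocc
    rw [revComp_involutive, length_revComp] at hocc'
    rw [length_revComp] at hctx
    refine ⟨_, ⟨hocc', by rwa [hctx, map_comp_involutive, ← length_revComp X]⟩, ?_⟩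
    have := hocc.1
    simp only [length_revComp] at this ⊢
    omega

theorem countP_suffixes_prefix_toW (Y T : List Base) (Q : SymB → Prop) [DecidablePred Q] :
    ((sentinelTerm T).tails.dropLast).countP (fun S => toW Y <+: S ∧ Q (S.getD Y.length ⊥)) =
      {i | occursAt Y T i ∧ Q (rightCtx T Y.length i)}.ncard := by
  rw [Set.ncard_setOf_eq_countP_range (n := T.length + 1) fun i h => by have := h.1.1; omega,
    List.tails_dropLast, List.countP_map, length_sentinelTerm]
  refine List.countP_congr fun i hi => ?_
  have hi : i ≤ T.length := Nat.lt_succ_iff.1 (List.mem_range.1 hi)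
  simp only [Function.comp_apply, decide_eq_true_eq, toW_prefix_sentinelTerm_drop_iff hi,
    List.getD_eq_getElem?_getD, List.getElem?_drop]
  rw [← List.getD_eq_getElem?_getD, sentinelTerm_getD]
  rfl

theorem RCClosed.countP_allSuffixes {R : Multiset (List Base)} (hR : RCClosed R) (X : List Base)
    (Q : SymB → Prop) [DecidablePred Q] :
    (allSuffixes R).countP
        (fun S => toW (revComp X) <+: S ∧ Q (S.getD (revComp X).length ⊥)) =
      leftCtxCount R X (fun a => Q (WithBot.map comp a)) := by
  rw [allSuffixes, Multiset.countP_bind]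
  simp only [Multiset.coe_countP, countP_suffixes_prefix_toW, ncard_occursAt_revComp]
  conv_rhs => rw [leftCtxCount, ← hR.map_revComp, Multiset.map_map]
  simp only [Function.comp_def]

theorem countP_taggedSuffixes (R : Multiset (List Base)) (X : List Base) (Q : SymB → Prop)
    [DecidablePred Q] :
    (taggedSuffixes R).countP (fun p => toW X <+: p.1 ∧ Q p.2) = leftCtxCount R X Q := by
  rw [taggedSuffixes, Multiset.countP_bind, leftCtxCount]
  refine congrArg Multiset.sum (Multiset.map_congr rfl fun T _ => ?_)
  rw [Multiset.coe_countP, List.countP_map,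
    Set.ncard_setOf_eq_countP_range (n := T.length + 1) fun i h => by have := h.1.1; omega]
  refine List.countP_congr fun i hi => ?_
  have hi : i ≤ T.length := Nat.lt_succ_iff.1 (List.mem_range.1 hi)
  simp only [Function.comp_apply, decide_eq_true_eq, toW_prefix_sentinelTerm_drop_iff hi,
    leftCtx, sentinelTerm_getD]
  exact decide_eq_true_iff.symm

theorem leftCtxCount_eq_occR (R : Multiset (List Base)) (X : List Base) (c : Base) :
    leftCtxCount R X (· = ↑c) = occR R (c :: X) := by
  refine congrArg Multiset.sum (Multiset.map_congr rfl fun T _ => ?_)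
  have himage :
      {j | occursAt X T j ∧ leftCtx T j = c} = (· + 1) '' {i | occursAt (c :: X) T i} := by
    ext j
    constructor
    · rintro ⟨hocc, hc⟩
      obtain ⟨i, rfl⟩ := Nat.exists_eq_add_one_of_ne_zero (show j ≠ 0 by
        rintro rfl; simp [leftCtx] at hc)
      exact ⟨i, occursAt_cons_iff.2 ⟨hocc, hc⟩, rfl⟩
    · rintro ⟨i, hi, rfl⟩
      exact occursAt_cons_iff.1 hi
  rw [himage, Set.ncard_image_of_injective _ (add_left_injective 1), occCount]

section RankInterval

variable {R : Multiset (List Base)} {W : List SymB} {s e : ℕ}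

theorem monotoneOn_getD_length_of_rankSet (hI : rankSet R W = Set.Ico s e) :
    MonotoneOn (fun k => ((sortedSuffixes R).getD k []).getD W.length ⊥) (Set.Ico s e) := by
  intro k hk k' hk' hkk'
  rw [← hI] at hk hk'
  exact List.getD_length_le_getD_of_prefix hk.2 hk'.2
    ((Multiset.pairwise_sort _ _).getD_le_getD [] hkk' hk'.1)

theorem rankSet_append_singleton (hI : rankSet R W = Set.Ico s e) (x : Base) :
    rankSet R (W ++ [(x : SymB)]) =
      ↑((Finset.Ico s e).filter fun k =>
        ((sortedSuffixes R).getD k []).getD W.length ⊥ = x) := by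
  ext k
  rw [Finset.coe_filter, Set.mem_ofPred_eq, ← Finset.mem_coe, Finset.coe_Ico, ← hI]
  exact (and_congr_right fun _ => List.append_singleton_prefix_iff WithBot.coe_ne_bot).trans
    and_assoc.symm

theorem card_filter_Ico_of_rankSet (hI : rankSet R W = Set.Ico s e) (Q : List SymB → Prop)
    [DecidablePred Q] :
    ((Finset.Ico s e).filter fun k => Q ((sortedSuffixes R).getD k [])).card =
      (allSuffixes R).countP (fun S => W <+: S ∧ Q S) := by
  have hIco : Finset.Ico s e = (Finset.range (sortedSuffixes R).length).filter
      fun k => W <+: (sortedSuffixes R).getD k [] := by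
    ext k
    rw [← Finset.mem_coe, Finset.coe_Ico, ← hI]
    simp [rankSet]
  rw [hIco, Finset.filter_filter]
  refine (List.card_filter_range_getD _ (fun S => W <+: S ∧ Q S) []).trans ?_
  rw [← Multiset.coe_countP, sortedSuffixes, Multiset.sort_eq]

end RankInterval

theorem stmt_8_general (R : Multiset (List Base)) (hR : RCClosed R)
    (X : List Base)
    (c : Base) (sXh eXh : ℕ)
    (hIXh : rankSet R (toW (revComp X)) = Set.Ico sXh eXh)
    (y z : ℕ)
    (hy : y = (R.map (fun T =>
      {i | occursAt X T i ∧
           WithBot.map comp (leftCtx T i) < ((comp c : Base) : WithBot Base)}.ncard)).sum)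
    (hz : z = occR R (c :: X)) :
    rankSet R (toW (revComp X) ++ [((comp c : Base) : WithBot Base)]) =
      Set.Ico (sXh + y) (sXh + y + z) ∧
    y = bwtCount R X c := by
  have hcount (Q : SymB → Prop) [DecidablePred Q] :
      ((Finset.Ico sXh eXh).filter fun k =>
        Q (((sortedSuffixes R).getD k []).getD (toW (revComp X)).length ⊥)).card =
        leftCtxCount R X (fun a => Q (WithBot.map comp a)) := by
    rw [card_filter_Ico_of_rankSet hIXh (fun S => Q (S.getD _ ⊥)), length_toW,
      hR.countP_allSuffixes]
  have hy' := hy.trans (hcount (· < ↑(comp c))).symm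
  have hcomp : (fun a : SymB => WithBot.map comp a = ↑(comp c)) = (· = ↑c) :=
    funext fun a => propext (map_comp_involutive.injective.eq_iff (b := ↑c))
  have hz' : _ = z := (hcount (· = ↑(comp c))).trans (by rw [hcomp, leftCtxCount_eq_occR, hz])
  refine ⟨?_, ?_⟩
  · rw [rankSet_append_singleton hIXh, hy', ← hz', ← Finset.coe_Ico, Finset.coe_inj]
    -- `convert` absorbs the mismatch between the `Decidable` instances of the two filters.
    convert Finset.Ico_filter_eq_of_monotoneOn (monotoneOn_getD_length_of_rankSet hIXh) _
  · rw [hy, bwtCount, ← Multiset.countP_eq_card_filter]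
    exact (countP_taggedSuffixes R X (fun a => WithBot.map comp a < ↑(comp c))).symm

/-- let `R` be RC-closed, `X` a nonempty DNA string occurring in
`R`, and `c` a DNA symbol. If `[s_X, e_X)` and `[s_X̂, e_X̂)` are the rank
intervals of the suffixes prefixed by `X` and `X̂`, then the rank interval of
the suffixes prefixed by `X̂·π(c)` is `[s_X̂ + y, s_X̂ + y + z)` where `y` is the
number of occurrences of `X` in strings of `R` whose left-context symbol `a`
satisfies `π(a) < π(c)` and `z = occ_R(c·X)`; moreover `y` equals the number of
ranks `k` in the interval of `X` with `π(BWT[k]) < π(c)`. -/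
theorem stmt_8 (R : Multiset (List Base)) (hR : RCClosed R)
    (X : List Base) (hX : X ≠ []) (hocc : 0 < occR R X)
    (c : Base) (sX eX sXh eXh : ℕ)
    (hIX : rankSet R (toW X) = Set.Ico sX eX)
    (hIXh : rankSet R (toW (revComp X)) = Set.Ico sXh eXh)
    (y z : ℕ)
    (hy : y = (R.map (fun T =>
      {i | occursAt X T i ∧
           WithBot.map comp (leftCtx T i) < ((comp c : Base) : WithBot Base)}.ncard)).sum)
    (hz : z = occR R (c :: X)) :
    rankSet R (toW (revComp X) ++ [((comp c : Base) : WithBot Base)]) =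
      Set.Ico (sXh + y) (sXh + y + z) ∧
    y = bwtCount R X c :=
  stmt_8_general R hR X c sXh eXh hIXh y z hy hz
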